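/- arXiv:math/0701285 — 6 statements merged into one kernel-verified Lean document; each statement's English description precedes it below -/
import Mathlib

section
/- Let α, β ∈ ℝ with α > 1, and put γ = α^{-1}, δ = α^{-1}(1 − β). Then a positive integer n satisfies n = ⌊αm + β⌋ for some integer m if and only if 0 < {γn + δ} ≤ γ, where {x} denotes the fractional part of x. -/
open scoped BigOperators

noncomputable section

/-- Distance from `x` to the nearest integer. -/
def nint (x : ℝ) : ℝ := |x - round x|

/-- The set of exponents `t` such that `liminf n^t ⟦γ n⟧ = 0`. -/
def typeSet (γ : ℝ) : Set ℝ :=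
  {t : ℝ | Filter.liminf (fun n : ℕ => (n : ℝ) ^ t * nint (γ * n)) Filter.atTop = 0}

/-- An irrational number is of finite type if its type set is bounded above. -/
def IsOfFiniteType (γ : ℝ) : Prop := BddAbove (typeSet γ)

/-- The type of an irrational number. -/
def irrType (γ : ℝ) : ℝ := sSup (typeSet γ)

/-- The Beatty sequence `B_{α,β}`, as a set of positive natural numbers. -/
def BeattySet (α β : ℝ) : Set ℕ :=
  {n : ℕ | 0 < n ∧ ∃ m : ℤ, (n : ℤ) = ⌊α * m + β⌋}

/-- The 1-periodic function equal to `1` on `(0, γ]` modulo one and `0` elsewhere. -/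
def psi (γ : ℝ) (x : ℝ) : ℝ := if 0 < Int.fract x ∧ Int.fract x ≤ γ then 1 else 0

/-- `psiConv γ κ` is the `κ`-fold convolution `ψ^{(κ)}` of `psi γ` with itself. -/
def psiConv (γ : ℝ) : ℕ → ℝ → ℝ
  | 0 => fun _ => 0
  | 1 => psi γ
  | (k + 2) => fun x => ∫ y in (0:ℝ)..1, psiConv γ (k + 1) (x - y) * psi γ y

/-- The singular series `𝔖_κ(N)`. -/
def singularSeries (κ : ℕ) (N : ℕ) : ℝ :=
  (∏ p ∈ N.primeFactors, (1 + (-1 : ℝ) ^ κ / ((p : ℝ) - 1) ^ (κ - 1))) *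
    (∏' p : {p : ℕ // p.Prime ∧ ¬(p ∣ N)}, (1 + (-1 : ℝ) ^ (κ + 1) / (((p : ℕ) : ℝ) - 1) ^ κ))

open Classical in
/-- `G_κ(N) = ∑_{n₁+⋯+n_κ=N, nᵢ ∈ B_{α,β}} Λ(n₁)⋯Λ(n_κ)`. -/
def beattyG (α β : ℝ) (κ N : ℕ) : ℝ :=
  ∑ f ∈ Finset.Nat.antidiagonalTuple κ N,
    ∏ i : Fin κ, (if f i ∈ BeattySet α β then ArithmeticFunction.vonMangoldt (f i) else 0)

/-- `e(x) = e^{2πix}`. -/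
def e (x : ℝ) : ℂ := Complex.exp (2 * Real.pi * Complex.I * x)

/-- The Möbius function, real-valued. -/
def mu (n : ℕ) : ℝ := ((ArithmeticFunction.moebius n : ℤ) : ℝ)

theorem Int.exists_mem_Ico_sub_iff_fract {x γ : ℝ} (hγ : γ < 1) :
    (∃ m : ℤ, x - γ ≤ m ∧ (m : ℝ) < x) ↔ 0 < Int.fract x ∧ Int.fract x ≤ γ := by
  constructor
  · rintro ⟨m, hle, hlt⟩
    have hfloor : ⌊x⌋ = m := Int.floor_eq_iff.mpr ⟨hlt.le, by linarith⟩
    rw [Int.fract, hfloor]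
    constructor <;> linarith
  · rintro ⟨hpos, hle⟩
    refine ⟨⌊x⌋, ?_, ?_⟩ <;> linarith [Int.self_sub_floor x]

theorem Int.floor_mul_add_eq_iff {α β : ℝ} (hα : 0 < α) (m n : ℤ) :
    ⌊α * m + β⌋ = n ↔ (n - β) / α ≤ m ∧ (m : ℝ) < (n + 1 - β) / α := by
  rw [Int.floor_eq_iff, div_le_iff₀ hα, lt_div_iff₀ hα]
  constructor <;> rintro ⟨h₁, h₂⟩ <;> constructor <;> linarith

theorem statement5_general (α β : ℝ) (hα : 1 < α) (n : ℕ) :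
    (∃ m : ℤ, (n : ℤ) = ⌊α * m + β⌋) ↔
      (0 < Int.fract (α⁻¹ * n + α⁻¹ * (1 - β)) ∧
        Int.fract (α⁻¹ * n + α⁻¹ * (1 - β)) ≤ α⁻¹) := by
  have hx : α⁻¹ * n + α⁻¹ * (1 - β) = (n + 1 - β) / α := by ring
  rw [hx, ← Int.exists_mem_Ico_sub_iff_fract (inv_lt_one_of_one_lt₀ hα)]
  refine exists_congr fun m => ?_
  have hlow : (n + 1 - β) / α - α⁻¹ = (n - β) / α := by ring
  rw [eq_comm, Int.floor_mul_add_eq_iff (by linarith) m n, hlow]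
  simp only [Int.cast_natCast]

theorem statement5 (α β : ℝ) (hα : 1 < α) (n : ℕ) (hn : 0 < n) :
    (∃ m : ℤ, (n : ℤ) = ⌊α * m + β⌋) ↔
      (0 < Int.fract (α⁻¹ * n + α⁻¹ * (1 - β)) ∧
        Int.fract (α⁻¹ * n + α⁻¹ * (1 - β)) ≤ α⁻¹) :=
  statement5_general α β hα n

end
end

section
/- For every integer κ ≥ 2 and every integer N ≥ 1, the singular series satisfies the identity 𝔖_κ(N) = ∑_{d | N} ∑_{c ≥ 1, gcd(c,d) = 1} μ(c)^{κ+1} μ(d)^κ d / (φ(c)^κ φ(d)^κ), where the inner sum converges absolutely. -/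
open scoped BigOperators

noncomputable section

/-- The general term of the inner sum in the first singular-series identity. -/
def sTerm₁ (κ d : ℕ) (c : ℕ) : ℝ :=
  if 1 ≤ c ∧ Nat.gcd c d = 1 then
    mu c ^ (κ + 1) * mu d ^ κ * d / ((Nat.totient c : ℝ) ^ κ * (Nat.totient d : ℝ) ^ κ)
  else 0

/-! The summand `sTerm₁ κ d c` factors as `w(d) g_d(c)` (`divisorWeight`, `innerSummand`), where
`w(d) = μ(d)^κ d / φ(d)^κ` and `g_d(c) = μ(c)^{κ+1} / φ(c)^κ` for `c` coprime to `d`. Both are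
multiplicative and supported on squarefree numbers, and `|g_d(p)| ≤ (p-1)^{-κ}` is summable over
primes as `κ ≥ 2`, so `g_d` is absolutely summable with Euler product `∏_{p ∤ d} (1 + t_p)`,
`t_p = (-1)^{κ+1}/(p-1)^κ`. For `d ∣ N` this is `∏_{p ∤ N} (1 + t_p)` times the finite product
over `p ∣ N, p ∤ d`. Summing over squarefree `d ∣ N`, i.e. over sets `A` of primes dividing `N`,
gives `∑_A ∏_{p ∈ A} w(p) ∏_{p ∉ A} (1 + t_p) = ∏_{p ∣ N} (w(p) + 1 + t_p)`, and
`w(p) + 1 + t_p = 1 + (-1)^κ/(p-1)^{κ-1}`. -/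

open Finset

lemma map_prod_primes_of_coprime_mul {M : Type*} [CommMonoid M] {f : ℕ → M} (hf₁ : f 1 = 1)
    (hmul : ∀ {m n}, m.Coprime n → f (m * n) = f m * f n) {s : Finset ℕ}
    (hs : ∀ p ∈ s, p.Prime) : f (∏ p ∈ s, p) = ∏ p ∈ s, f p := by
  induction s using Finset.induction_on with
  | empty => simpa using hf₁
  | insert q s hq ih =>
    rw [forall_mem_insert] at hs
    have hcop : q.Coprime (∏ p ∈ s, p) := Nat.Coprime.prod_right fun p hp =>
      (Nat.coprime_primes hs.1 (hs.2 p hp)).mpr (ne_of_mem_of_not_mem hp hq).symm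
    rw [prod_insert hq, prod_insert hq, hmul hcop, ih hs.2]

lemma hasSum_pow_of_squarefree_support {R : Type*} [AddCommMonoid R] [One R] [TopologicalSpace R]
    {f : ℕ → R} (hf₁ : f 1 = 1) (hsf : ∀ n, ¬Squarefree n → f n = 0) {p : ℕ} (hp : p.Prime) :
    HasSum (fun e => f (p ^ e)) (1 + f p) := by
  have hsupp : ∀ e ∉ ({0, 1} : Finset ℕ), f (p ^ e) = 0 := by
    intro e he
    simp only [mem_insert, mem_singleton, not_or] at he
    exact hsf _ fun h => he.2 ((Nat.squarefree_pow_iff hp.ne_one he.1).mp h).2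
  simpa [hf₁] using hasSum_sum_of_ne_finset_zero hsupp

lemma hasProd_one_add_of_squarefree_support {R : Type*} [NormedCommRing R] [CompleteSpace R]
    {f : ℕ → R} (hf₁ : f 1 = 1) (hmul : ∀ {m n}, m.Coprime n → f (m * n) = f m * f n)
    (hsf : ∀ n, ¬Squarefree n → f n = 0) (hsum : Summable (‖f ·‖)) :
    HasProd (fun p : Nat.Primes => 1 + f p) (∑' n, f n) := by
  convert EulerProduct.eulerProduct_hasProd hf₁ hmul hsum (hsf 0 not_squarefree_zero) with p
  exact (hasSum_pow_of_squarefree_support hf₁ hsf p.prop).tsum_eq.symm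

lemma summable_of_nonneg_of_squarefree_support {f : ℕ → ℝ} (hf₀ : ∀ n, 0 ≤ f n)
    (hf₁ : f 1 = 1) (hmul : ∀ {m n}, m.Coprime n → f (m * n) = f m * f n)
    (hsf : ∀ n, ¬Squarefree n → f n = 0) (hprimes : Summable fun p : Nat.Primes => f p) :
    Summable f := by
  refine summable_of_sum_range_le hf₀ (c := Real.exp (∑' p : Nat.Primes, f p)) fun N => ?_
  obtain ⟨hsmooth, hprod⟩ := EulerProduct.summable_and_hasSum_smoothNumbers_prod_primesBelow_tsum
    hf₁ hmul (fun hp => (hasSum_pow_of_squarefree_support hf₁ hsf hp).summable.abs) N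
  have hsupp : ∀ n ∈ range N, f n = (N.smoothNumbers : Set ℕ).indicator f n := by
    intro n hn
    rcases n.eq_zero_or_pos with rfl | hn0
    · simp only [hsf 0 not_squarefree_zero, Set.indicator_apply, ite_self]
    · exact (Set.indicator_of_mem (Nat.mem_smoothNumbers_of_lt hn0 (mem_range.mp hn)) f).symm
  calc ∑ n ∈ range N, f n
      ≤ ∑' n, (N.smoothNumbers : Set ℕ).indicator f n := by
        rw [sum_congr rfl hsupp]
        exact (summable_subtype_iff_indicator.mp hsmooth.of_abs).sum_le_tsum _
          fun n _ => Set.indicator_nonneg (fun n _ => hf₀ n) n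
    _ = ∏ p ∈ N.primesBelow, (1 + f p) := by
        rw [← _root_.tsum_subtype, hprod.tsum_eq]
        exact prod_congr rfl fun p hp =>
          (hasSum_pow_of_squarefree_support hf₁ hsf (Nat.prime_of_mem_primesBelow hp)).tsum_eq
    _ ≤ Real.exp (∑ p ∈ N.primesBelow, f p) := Real.prod_one_add_le_exp_sum _ hf₀
    _ ≤ Real.exp (∑' p : Nat.Primes, f p) := by
        rw [Real.exp_le_exp, ← sum_filter_of_ne fun p hp _ => Nat.prime_of_mem_primesBelow hp,
          ← sum_subtype_eq_sum_filter]
        exact Summable.sum_le_tsum (f := fun p : Nat.Primes => f p) _ (fun p _ => hf₀ p) hprimes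

lemma summable_inv_sub_one_pow_primes {κ : ℕ} (hκ : 2 ≤ κ) :
    Summable fun p : Nat.Primes => (((p : ℝ) - 1) ^ κ)⁻¹ := by
  refine ((Nat.Primes.summable_rpow.mpr (by norm_num : (-2 : ℝ) < -1)).mul_left 4).of_nonneg_of_le
    (fun p => ?_) fun p => ?_
  · have : (1 : ℝ) ≤ p := by exact_mod_cast p.prop.one_le
    exact inv_nonneg.mpr (pow_nonneg (by linarith) _)
  · have hp : (2 : ℝ) ≤ p := by exact_mod_cast p.prop.two_le
    calc (((p : ℝ) - 1) ^ κ)⁻¹ ≤ (((p : ℝ) / 2) ^ 2)⁻¹ := by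
          refine inv_anti₀ (by positivity) ?_
          calc ((p : ℝ) / 2) ^ 2 ≤ ((p : ℝ) - 1) ^ 2 := by gcongr; linarith
            _ ≤ ((p : ℝ) - 1) ^ κ := pow_le_pow_right₀ (by linarith) hκ
      _ = 4 * (p : ℝ) ^ (-2 : ℝ) := by
          rw [Real.rpow_neg (by positivity), Real.rpow_two]
          ring

namespace SingularSeries

lemma mu_one : mu 1 = 1 := by simp [mu]

lemma mu_mul {m n : ℕ} (h : m.Coprime n) : mu (m * n) = mu m * mu n := by
  simp [mu, ArithmeticFunction.isMultiplicative_moebius.map_mul_of_coprime h]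

lemma mu_prime {p : ℕ} (hp : p.Prime) : mu p = -1 := by
  simp [mu, ArithmeticFunction.moebius_apply_prime hp]

lemma mu_eq_zero_of_not_squarefree {n : ℕ} (hn : ¬Squarefree n) : mu n = 0 := by
  simp [mu, ArithmeticFunction.moebius_eq_zero_of_not_squarefree hn]

section

variable (κ : ℕ)

def innerSummand (d c : ℕ) : ℝ :=
  if c.Coprime d then mu c ^ (κ + 1) / (c.totient : ℝ) ^ κ else 0

def divisorWeight (d : ℕ) : ℝ := mu d ^ κ * d / (d.totient : ℝ) ^ κ

lemma innerSummand_one (d : ℕ) : innerSummand κ d 1 = 1 := by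
  simp [innerSummand, mu_one]

lemma innerSummand_mul (d : ℕ) {m n : ℕ} (h : m.Coprime n) :
    innerSummand κ d (m * n) = innerSummand κ d m * innerSummand κ d n := by
  simp only [innerSummand, Nat.coprime_mul_iff_left, mu_mul h, Nat.totient_mul h]
  split_ifs <;> simp_all [mul_pow, mul_div_mul_comm]

lemma innerSummand_of_not_squarefree (d : ℕ) {c : ℕ} (hc : ¬Squarefree c) :
    innerSummand κ d c = 0 := by
  simp [innerSummand, mu_eq_zero_of_not_squarefree hc]

lemma innerSummand_prime (d : ℕ) {p : ℕ} (hp : p.Prime) :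
    innerSummand κ d p = if p ∣ d then 0 else (-1) ^ (κ + 1) / ((p : ℝ) - 1) ^ κ := by
  simp [innerSummand, hp.coprime_iff_not_dvd, mu_prime hp, Nat.totient_prime hp,
    Nat.cast_sub hp.one_le]

lemma divisorWeight_one : divisorWeight κ 1 = 1 := by simp [divisorWeight, mu_one]

lemma divisorWeight_mul {m n : ℕ} (h : m.Coprime n) :
    divisorWeight κ (m * n) = divisorWeight κ m * divisorWeight κ n := by
  simp only [divisorWeight, mu_mul h, Nat.totient_mul h, Nat.cast_mul, mul_pow]
  ring

lemma divisorWeight_prime {p : ℕ} (hp : p.Prime) :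
    divisorWeight κ p = (-1) ^ κ * p / ((p : ℝ) - 1) ^ κ := by
  simp [divisorWeight, mu_prime hp, Nat.totient_prime hp, Nat.cast_sub hp.one_le]

lemma sTerm₁_eq_divisorWeight_mul (d : ℕ) :
    sTerm₁ κ d = fun c => divisorWeight κ d * innerSummand κ d c := by
  ext c
  rcases c.eq_zero_or_pos with rfl | hc
  · simp [sTerm₁, innerSummand, mu, ArithmeticFunction.moebius]
  · simp only [sTerm₁, innerSummand, divisorWeight, Nat.coprime_iff_gcd_eq_one,
      show 1 ≤ c from hc, true_and]
    split_ifs <;> ring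

end

variable {κ : ℕ}

lemma summable_norm_innerSummand (hκ : 2 ≤ κ) (d : ℕ) : Summable (‖innerSummand κ d ·‖) := by
  refine summable_of_nonneg_of_squarefree_support (fun _ => norm_nonneg _)
    (by simp [innerSummand_one]) (fun h => by simp [innerSummand_mul κ d h])
    (fun n hn => by simp [innerSummand_of_not_squarefree κ d hn]) ?_
  refine (summable_inv_sub_one_pow_primes hκ).of_nonneg_of_le (fun _ => norm_nonneg _) fun p => ?_
  have hp : (1 : ℝ) ≤ p := by exact_mod_cast p.prop.one_le
  rw [innerSummand_prime κ d p.prop]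
  split_ifs
  · simpa using pow_nonneg (by linarith) κ
  · simp [abs_of_nonneg (by linarith : (0 : ℝ) ≤ p - 1)]

lemma hasProd_innerSummand (hκ : 2 ≤ κ) (d : ℕ) :
    HasProd (fun p : Nat.Primes => 1 + innerSummand κ d p) (∑' c, innerSummand κ d c) :=
  hasProd_one_add_of_squarefree_support (innerSummand_one κ d) (innerSummand_mul κ d)
    (fun _ => innerSummand_of_not_squarefree κ d) (summable_norm_innerSummand hκ d)

lemma tsum_innerSummand_of_dvd (hκ : 2 ≤ κ) {d N : ℕ} (hd : d ∣ N) (hN : N ≠ 0) :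
    ∑' c, innerSummand κ d c =
      (∏ p ∈ N.primeFactors, (1 + innerSummand κ d p)) * ∑' c, innerSummand κ N c := by
  -- For `p ∣ N` the Euler factor of `innerSummand κ N` is `1`; for `p ∤ N` it is that of `d`.
  set F : ℕ → ℝ := fun p => if p ∣ N then 1 + innerSummand κ d p else 1
  have hF : HasProd (fun p : Nat.Primes => F p) (∏ p ∈ N.primeFactors.subtype Nat.Prime, F p) :=
    hasProd_prod_of_ne_finset_one fun p hp =>
      if_neg fun h => hp (mem_subtype.mpr (Nat.mem_primeFactors.mpr ⟨p.prop, h, hN⟩))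
  have hFprod : ∏ p ∈ N.primeFactors.subtype Nat.Prime, F p =
      ∏ p ∈ N.primeFactors, (1 + innerSummand κ d p) := by
    refine (prod_subtype_eq_prod_filter F).trans ?_
    rw [filter_true_of_mem fun p hp => Nat.prime_of_mem_primeFactors hp]
    exact prod_congr rfl fun p hp => if_pos (Nat.dvd_of_mem_primeFactors hp)
  rw [← hFprod]
  refine (hasProd_innerSummand hκ d).unique ?_
  convert hF.mul (hasProd_innerSummand hκ N) using 2 with p
  simp only [F, innerSummand_prime κ _ p.prop]
  by_cases hpN : (p : ℕ) ∣ N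
  · simp [hpN]
  · have hpd : ¬(p : ℕ) ∣ d := fun h => hpN (h.trans hd)
    simp [hpN, hpd]

lemma tprod_not_dvd_eq_tsum_innerSummand (hκ : 2 ≤ κ) (N : ℕ) :
    ∏' p : {p : ℕ // p.Prime ∧ ¬p ∣ N}, (1 + (-1 : ℝ) ^ (κ + 1) / (((p : ℕ) : ℝ) - 1) ^ κ) =
      ∑' c, innerSummand κ N c := by
  rw [← (hasProd_innerSummand hκ N).tprod_eq]
  refine (tprod_subtype {p : ℕ | p.Prime ∧ ¬p ∣ N}
    fun p : ℕ => 1 + (-1 : ℝ) ^ (κ + 1) / ((p : ℝ) - 1) ^ κ).trans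
    (Eq.trans ?_ (tprod_subtype {p : ℕ | p.Prime} fun p => 1 + innerSummand κ N p).symm)
  congr 1 with p
  simp only [Set.mulIndicator_apply, Set.mem_ofPred_eq]
  by_cases hp : p.Prime
  · by_cases hpN : p ∣ N <;> simp [hp, hpN, innerSummand_prime κ N hp]
  · simp [hp]

lemma divisorWeight_add_one_add (hκ : κ ≠ 0) {p : ℕ} (hp : p.Prime) :
    divisorWeight κ p + (1 + (-1) ^ (κ + 1) / ((p : ℝ) - 1) ^ κ) =
      1 + (-1) ^ κ / ((p : ℝ) - 1) ^ (κ - 1) := by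
  obtain ⟨k, rfl⟩ := Nat.exists_eq_add_one_of_ne_zero hκ
  have hp1 : (p : ℝ) - 1 ≠ 0 := by
    have : (2 : ℝ) ≤ p := by exact_mod_cast hp.two_le
    linarith
  rw [divisorWeight_prime _ hp, Nat.add_sub_cancel]
  field_simp
  ring

lemma divisorWeight_prod_mul_prod_one_add_innerSummand {N : ℕ} {A : Finset ℕ}
    (hA : A ⊆ N.primeFactors) :
    divisorWeight κ (∏ p ∈ A, p) * ∏ p ∈ N.primeFactors, (1 + innerSummand κ (∏ p ∈ A, p) p) =
      (∏ p ∈ A, divisorWeight κ p) *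
        ∏ p ∈ N.primeFactors \ A, (1 + (-1) ^ (κ + 1) / ((p : ℝ) - 1) ^ κ) := by
  have hprime : ∀ p ∈ A, p.Prime := fun p hp => Nat.prime_of_mem_primeFactors (hA hp)
  have hdvd : ∀ p, p.Prime → (p ∣ ∏ q ∈ A, q ↔ p ∈ A) := fun p hp => by
    have hne : ∏ q ∈ A, q ≠ 0 := prod_ne_zero_iff.mpr fun q hq => (hprime q hq).ne_zero
    conv_rhs => rw [← Nat.primeFactors_prod hprime, Nat.mem_primeFactors_of_ne_zero hne]
    exact (and_iff_right hp).symm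
  have hfactorA : ∏ p ∈ A, (1 + innerSummand κ (∏ q ∈ A, q) p) = 1 := prod_eq_one fun p hp => by
    rw [innerSummand_prime κ _ (hprime p hp), if_pos ((hdvd p (hprime p hp)).mpr hp), add_zero]
  rw [map_prod_primes_of_coprime_mul (divisorWeight_one κ) (divisorWeight_mul κ) hprime,
    ← prod_sdiff hA, hfactorA, mul_one]
  congr 1
  refine prod_congr rfl fun p hp => ?_
  rw [mem_sdiff] at hp
  have hp' := Nat.prime_of_mem_primeFactors hp.1
  rw [innerSummand_prime κ _ hp', if_neg ((hdvd p hp').not.mpr hp.2)]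

lemma sum_divisors_divisorWeight_mul_prod (hκ : κ ≠ 0) {N : ℕ} (hN : N ≠ 0) :
    ∑ d ∈ N.divisors, divisorWeight κ d * ∏ p ∈ N.primeFactors, (1 + innerSummand κ d p) =
      ∏ p ∈ N.primeFactors, (1 + (-1) ^ κ / ((p : ℝ) - 1) ^ (κ - 1)) := by
  rw [← sum_filter_of_ne (p := Squarefree) fun d _ h => ?_, Nat.sum_divisors_filter_squarefree hN]
  · simp only [Nat.factors_eq, List.toFinset_coe, Nat.toFinset_factors, prod_val, id_eq]
    calc _ = ∑ A ∈ N.primeFactors.powerset, (∏ p ∈ A, divisorWeight κ p) *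
            ∏ p ∈ N.primeFactors \ A, (1 + (-1) ^ (κ + 1) / ((p : ℝ) - 1) ^ κ) :=
          sum_congr rfl fun A hA =>
            divisorWeight_prod_mul_prod_one_add_innerSummand (mem_powerset.mp hA)
      _ = _ := by
          rw [← prod_add]
          exact prod_congr rfl fun p hp =>
            divisorWeight_add_one_add hκ (Nat.prime_of_mem_primeFactors hp)
  · by_contra hd
    simp [divisorWeight, mu_eq_zero_of_not_squarefree hd, hκ] at h

end SingularSeries

open SingularSeries

theorem statement8 (κ N : ℕ) (hκ : 2 ≤ κ) (hN : 1 ≤ N) :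
    (∀ d ∈ N.divisors, Summable (sTerm₁ κ d)) ∧
      singularSeries κ N = ∑ d ∈ N.divisors, ∑' c : ℕ, sTerm₁ κ d c := by
  have hN0 : N ≠ 0 := Nat.one_le_iff_ne_zero.mp hN
  refine ⟨fun d _ => ?_, ?_⟩
  · rw [sTerm₁_eq_divisorWeight_mul]
    exact (summable_norm_innerSummand hκ d).of_norm.mul_left _
  calc singularSeries κ N
      = (∑ d ∈ N.divisors, divisorWeight κ d * ∏ p ∈ N.primeFactors, (1 + innerSummand κ d p)) *
          ∑' c, innerSummand κ N c := by
        rw [singularSeries, sum_divisors_divisorWeight_mul_prod (by omega) hN0,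
          tprod_not_dvd_eq_tsum_innerSummand hκ]
    _ = ∑ d ∈ N.divisors, ∑' c, sTerm₁ κ d c := by
        rw [sum_mul]
        refine sum_congr rfl fun d hd => ?_
        rw [sTerm₁_eq_divisorWeight_mul, tsum_mul_left,
          tsum_innerSummand_of_dvd hκ (Nat.dvd_of_mem_divisors hd) hN0, mul_assoc]

end
end

section
/- Let α, β ∈ ℝ with α > 1, and let κ be a positive integer with κ < α. If N is a positive integer whose fractional part {(N − κβ)α^{-1}} lies in the open interval (0, 1 − κα^{-1}), then N cannot be written in the form N = ⌊αm₁ + β⌋ + ⌊αm₂ + β⌋ + ⋯ + ⌊αm_κ + β⌋ with m₁, …, m_κ ∈ ℕ. In particular, such N is not a sum of κ elements of the Beatty sequence B_{α,β}. -/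
open scoped BigOperators

noncomputable section

/-!
Since `⌊x⌋ = x - {x}`, a representation `N = ∑ ⌊α mᵢ + β⌋` gives `(N - κβ)/α = M - S/α` with
`M = ∑ mᵢ ∈ ℕ` and `S = ∑ {α mᵢ + β} ∈ [0, κ]`. Hence `{(N - κβ)/α}` is `{-S/α}`, which is either `0`
or `1 - S/α ≥ 1 - κ/α`; in both cases it avoids `(0, 1 - κ/α)`.
-/

theorem Int.fract_intCast_sub_notMem_Ioo {R : Type*} [CommRing R] [LinearOrder R]
    [IsStrictOrderedRing R] [FloorRing R] (M : ℤ) {y c : R} (hy : 0 ≤ y) (hyc : y ≤ c) :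
    Int.fract ((M : R) - y) ∉ Set.Ioo 0 (1 - c) := by
  rintro ⟨hpos, hlt⟩
  rw [sub_eq_add_neg, Int.fract_intCast_add] at hpos hlt
  have hy1 : y < 1 := by linarith
  have hfract : Int.fract y = y := Int.fract_eq_self.mpr ⟨hy, hy1⟩
  rcases hy.eq_or_lt with rfl | hy0
  · simp at hpos
  · rw [Int.fract_neg (hfract.symm ▸ hy0.ne'), hfract] at hlt
    linarith

theorem Finset.sum_floor_mul_add {ι : Type*} (s : Finset ι) (α β : ℝ) (m : ι → ℝ) :
    ∑ i ∈ s, (⌊α * m i + β⌋ : ℝ) =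
      α * ∑ i ∈ s, m i + s.card * β - ∑ i ∈ s, Int.fract (α * m i + β) := by
  simp only [← Int.self_sub_fract, Finset.sum_sub_distrib, Finset.sum_add_distrib, Finset.mul_sum,
    Finset.sum_const, nsmul_eq_mul]

theorem statement12_general (α β : ℝ) (hα : 1 < α) (κ : ℕ) (N : ℕ)
    (hfrac : Int.fract (((N : ℝ) - κ * β) * α⁻¹) ∈ Set.Ioo 0 (1 - κ * α⁻¹)) :
    ¬ ∃ m : Fin κ → ℕ, (∀ i, 1 ≤ m i) ∧ (N : ℤ) = ∑ i, ⌊α * (m i : ℝ) + β⌋ := by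
  rintro ⟨m, -, hsum⟩
  set S := ∑ i, Int.fract (α * (m i : ℝ) + β)
  have hN : (N : ℝ) = α * ∑ i, (m i : ℝ) + κ * β - S := by
    have := Finset.univ.sum_floor_mul_add α β (fun i => (m i : ℝ))
    rw [Finset.card_univ, Fintype.card_fin] at this
    rw [← this]
    exact_mod_cast hsum
  have hSκ : S ≤ κ := by
    simpa using Finset.univ.sum_le_card_nsmul _ 1
      fun i _ => (Int.fract_lt_one (α * (m i : ℝ) + β)).le
  have hαinv : 0 ≤ α⁻¹ := inv_nonneg.mpr (by linarith)
  have hshift : ((N : ℝ) - κ * β) * α⁻¹ = ((∑ i, m i : ℕ) : ℤ) - S * α⁻¹ := by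
    rw [hN]
    push_cast
    field_simp
    ring
  rw [hshift] at hfrac
  exact Int.fract_intCast_sub_notMem_Ioo _
    (mul_nonneg (Finset.sum_nonneg fun i _ => Int.fract_nonneg _) hαinv)
    (mul_le_mul_of_nonneg_right hSκ hαinv) hfrac

theorem statement12 (α β : ℝ) (hα : 1 < α) (κ : ℕ) (hκ : 0 < κ) (hκα : (κ : ℝ) < α)
    (N : ℕ) (hN : 0 < N)
    (hfrac : Int.fract (((N : ℝ) - κ * β) * α⁻¹) ∈ Set.Ioo 0 (1 - κ * α⁻¹)) :
    ¬ ∃ m : Fin κ → ℕ, (∀ i, 1 ≤ m i) ∧ (N : ℤ) = ∑ i, ⌊α * (m i : ℝ) + β⌋ :=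
  statement12_general α β hα κ N hfrac

end
end

section
/- Let α > 1 be irrational and put γ = α^{-1} ∈ (0,1). If κ ≥ ⌈α⌉ (the least integer ≥ α), then there exists a constant c > 0, depending only on α and κ, such that ψ^{(κ)}(x) ≥ c for all x ∈ ℝ. -/
open scoped BigOperators

noncomputable section

/-!
View `psi γ` as the indicator of the arc `(0, γ]` of `ℝ / ℤ`. If `ψ^{(k)} ≥ c` on an arc of
length at least `δ`, with `δ ≤ γ`, then for `x` in the arc widened by `γ - 2δ` the set of
`y ∈ (0, γ)` with `x - y` in the original arc has measure at least `δ`, so `ψ^{(k+1)} ≥ c δ`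
there. Starting from `ψ = 1` on `(0, γ)`, after `κ - 1` steps `ψ^{(κ)} ≥ δ^{κ-1}` on an arc of
length `κ γ - 2 (κ - 1) δ`. Since `κ > α`, i.e. `κ γ > 1`, this exceeds `1` for small `δ`, and the
arc is the whole circle.
-/

open MeasureTheory Set

/-- The preimage in `ℝ` of the arc `(a, b)` of `ℝ / ℤ`. -/
def periodicIoo (a b : ℝ) : Set ℝ := {x | ∃ n : ℤ, x - n ∈ Ioo a b}

lemma periodicIoo_eq_univ {a b : ℝ} (h : 1 < b - a) : periodicIoo a b = univ := by
  refine eq_univ_of_forall fun x => ⟨round (x - (a + b) / 2), ?_⟩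
  obtain ⟨hlow, hhigh⟩ := abs_le.mp (abs_sub_round (x - (a + b) / 2))
  constructor <;> linarith

lemma le_intervalIntegral_of_le_on_Ioo {g : ℝ → ℝ} (hg : IntervalIntegrable g volume 0 1)
    (hg0 : ∀ y ∈ Ioc (0 : ℝ) 1, 0 ≤ g y) {l u c : ℝ} (hl : 0 ≤ l) (hu : u ≤ 1) (hlu : l ≤ u)
    (hc : ∀ y ∈ Ioo l u, c ≤ g y) :
    c * (u - l) ≤ ∫ y in (0 : ℝ)..1, g y := by
  have hint : IntegrableOn g (Ioc 0 1) :=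
    (intervalIntegrable_iff_integrableOn_Ioc_of_le zero_le_one).mp hg
  have hsub : Ioo l u ⊆ Ioc 0 1 := Ioo_subset_Ioc_self.trans (Ioc_subset_Ioc hl hu)
  rw [intervalIntegral.integral_of_le zero_le_one]
  calc c * (u - l) = c * volume.real (Ioo l u) := by rw [Real.volume_real_Ioo_of_le hlu]
    _ ≤ ∫ y in Ioo l u, g y :=
        setIntegral_ge_of_const_le_real measurableSet_Ioo (by simp) hc (hint.mono_set hsub)
    _ ≤ ∫ y in Ioc 0 1, g y :=
        setIntegral_mono_set hint ((ae_restrict_iff' measurableSet_Ioc).mpr (ae_of_all _ hg0))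
          hsub.eventuallyLE

section Psi

variable {γ : ℝ}

lemma psi_nonneg (γ x : ℝ) : 0 ≤ psi γ x := by
  unfold psi; split_ifs <;> norm_num

lemma psi_le_one (γ x : ℝ) : psi γ x ≤ 1 := by
  unfold psi; split_ifs <;> norm_num

lemma measurable_psi (γ : ℝ) : Measurable (psi γ) :=
  Measurable.ite (measurable_fract (measurableSet_Ioc (a := 0) (b := γ)))
    measurable_const measurable_const

lemma psi_sub_intCast (γ x : ℝ) (n : ℤ) : psi γ (x - n) = psi γ x := by
  simp only [psi, Int.fract_sub_intCast]

lemma psi_eq_one_of_mem_Ioo (hγ1 : γ ≤ 1) {y : ℝ} (hy : y ∈ Ioo 0 γ) : psi γ y = 1 := by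
  have hfract : Int.fract y = y := Int.fract_eq_self.mpr ⟨hy.1.le, hy.2.trans_le hγ1⟩
  rw [psi, hfract, if_pos ⟨hy.1, hy.2.le⟩]

lemma psiConv_add_two (γ : ℝ) (k : ℕ) (x : ℝ) :
    psiConv γ (k + 2) x = ∫ y in (0 : ℝ)..1, psiConv γ (k + 1) (x - y) * psi γ y :=
  rfl

lemma measurable_intervalIntegral_sub_mul_psi {f : ℝ → ℝ} (hf : Measurable f) :
    Measurable fun x => ∫ y in (0 : ℝ)..1, f (x - y) * psi γ y := by
  have hF : Measurable fun p : ℝ × ℝ => f (p.1 - p.2) * psi γ p.2 :=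
    (hf.comp (measurable_fst.sub measurable_snd)).mul ((measurable_psi γ).comp measurable_snd)
  simp_rw [intervalIntegral.integral_of_le zero_le_one]
  exact hF.stronglyMeasurable.integral_prod_right'.measurable

lemma measurable_psiConv (γ : ℝ) : ∀ k, Measurable (psiConv γ k)
  | 0 => measurable_const
  | 1 => measurable_psi γ
  | k + 2 => measurable_intervalIntegral_sub_mul_psi (measurable_psiConv γ (k + 1))

lemma psiConv_nonneg (γ : ℝ) : ∀ k x, 0 ≤ psiConv γ k x
  | 0, _ => le_rfl
  | 1, x => psi_nonneg γ x
  | k + 2, _ => intervalIntegral.integral_nonneg zero_le_one fun y _ =>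
      mul_nonneg (psiConv_nonneg γ (k + 1) _) (psi_nonneg γ y)

lemma psiConv_le_one (γ : ℝ) : ∀ k x, psiConv γ k x ≤ 1
  | 0, _ => zero_le_one
  | 1, x => psi_le_one γ x
  | k + 2, x => by
    have hbound := intervalIntegral.norm_integral_le_of_norm_le_const (a := 0) (b := 1) (C := 1)
      (f := fun y => psiConv γ (k + 1) (x - y) * psi γ y) fun y _ => by
        rw [Real.norm_eq_abs, abs_of_nonneg (mul_nonneg (psiConv_nonneg γ _ _) (psi_nonneg γ y))]
        exact mul_le_one₀ (psiConv_le_one γ (k + 1) _) (psi_nonneg γ y) (psi_le_one γ y)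
    rw [psiConv_add_two]
    simpa using (le_abs_self _).trans hbound

lemma intervalIntegrable_psiConv_sub_mul_psi (γ : ℝ) (k : ℕ) (x : ℝ) :
    IntervalIntegrable (fun y => psiConv γ k (x - y) * psi γ y) volume 0 1 := by
  refine (intervalIntegrable_const (c := (1 : ℝ))).mono_fun
    (((measurable_psiConv γ k).comp (measurable_const.sub measurable_id)).mul
      (measurable_psi γ)).aestronglyMeasurable (ae_of_all _ fun y => ?_)
  dsimp only
  rw [norm_one, Real.norm_eq_abs,
    abs_of_nonneg (mul_nonneg (psiConv_nonneg γ _ _) (psi_nonneg γ y))]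
  exact mul_le_one₀ (psiConv_le_one γ k _) (psi_nonneg γ y) (psi_le_one γ y)

lemma psiConv_add_two_ge (hγ1 : γ ≤ 1) {k : ℕ} {a b c δ : ℝ} (hδ0 : 0 ≤ δ) (hδγ : δ ≤ γ)
    (hδ : δ ≤ b - a) (hc : 0 ≤ c) (hf : ∀ x ∈ periodicIoo a b, c ≤ psiConv γ (k + 1) x) :
    ∀ x ∈ periodicIoo (a + δ) (b + γ - δ), c * δ ≤ psiConv γ (k + 2) x := by
  rintro x ⟨n, hxa, hxb⟩
  set l := max (x - n - b) 0
  set u := min (x - n - a) γ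
  have hlen : δ ≤ u - l := by
    rw [le_sub_iff_add_le, le_min_iff, ← le_sub_iff_add_le', ← le_sub_iff_add_le', max_le_iff,
      max_le_iff]
    refine ⟨⟨?_, ?_⟩, ?_, ?_⟩ <;> linarith
  calc c * δ ≤ c * (u - l) := mul_le_mul_of_nonneg_left hlen hc
    _ ≤ ∫ y in (0 : ℝ)..1, psiConv γ (k + 1) (x - y) * psi γ y := by
        refine le_intervalIntegral_of_le_on_Ioo (intervalIntegrable_psiConv_sub_mul_psi γ _ x)
          (fun y _ => mul_nonneg (psiConv_nonneg γ _ _) (psi_nonneg γ y)) (le_max_right _ _)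
          ((min_le_right _ _).trans hγ1) (by linarith) fun y ⟨hly, hyu⟩ => ?_
        have hy : y ∈ Ioo 0 γ := ⟨(le_max_right _ _).trans_lt hly, hyu.trans_le (min_le_right _ _)⟩
        rw [psi_eq_one_of_mem_Ioo hγ1 hy, mul_one]
        refine hf _ ⟨n, ?_, ?_⟩
        · linarith [hyu.trans_le (min_le_left _ _)]
        · linarith [(le_max_left _ _).trans_lt hly]
    _ = psiConv γ (k + 2) x := (psiConv_add_two γ k x).symm

lemma pow_le_psiConv (hγ1 : γ ≤ 1) {δ : ℝ} (hδ : 0 ≤ δ) (hδγ : 2 * δ ≤ γ) :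
    ∀ k : ℕ, ∀ x ∈ periodicIoo (k * δ) ((k + 1) * γ - k * δ), δ ^ k ≤ psiConv γ (k + 1) x
  | 0, x, ⟨n, hx0, hxγ⟩ => by
    simp only [CharP.cast_eq_zero, zero_mul, zero_add, one_mul, sub_zero] at hx0 hxγ
    rw [pow_zero, zero_add, psiConv, ← psi_sub_intCast γ x n,
      psi_eq_one_of_mem_Ioo hγ1 ⟨hx0, hxγ⟩]
  | k + 1, x, hx => by
    have hwidth : 2 * ((k + 1) * δ) ≤ (k + 1) * γ :=
      (mul_left_comm _ _ _).trans_le (mul_le_mul_of_nonneg_left hδγ (by positivity))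
    rw [pow_succ]
    refine psiConv_add_two_ge hγ1 hδ (by linarith) (by linarith) (pow_nonneg hδ k)
      (pow_le_psiConv hγ1 hδ hδγ k) x ?_
    convert hx using 2 <;> push_cast <;> ring

theorem exists_pos_le_psiConv (hγ1 : γ ≤ 1) {κ : ℕ} (hκγ : 1 < κ * γ) :
    ∃ c : ℝ, 0 < c ∧ ∀ x, c ≤ psiConv γ κ x := by
  obtain ⟨k, rfl⟩ : ∃ k, κ = k + 1 :=
    Nat.exists_eq_succ_of_ne_zero (by rintro rfl; simp at hκγ; linarith)
  push_cast at hκγ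
  have hγ0 : 0 < γ := pos_of_mul_pos_right (one_pos.trans hκγ) (by positivity)
  set δ := min (γ / 2) (((k + 1) * γ - 1) / (2 * (k + 1)))
  have hδ0 : 0 < δ := lt_min (by positivity) (div_pos (by linarith) (by positivity))
  have hδγ : 2 * δ ≤ γ := by linarith [min_le_left (γ / 2) (((k + 1) * γ - 1) / (2 * (k + 1)))]
  have hδκ : 2 * (k + 1) * δ ≤ (k + 1) * γ - 1 := by
    rw [mul_comm, ← le_div_iff₀ (by positivity)]
    exact min_le_right _ _
  refine ⟨δ ^ k, pow_pos hδ0 k, fun x => pow_le_psiConv hγ1 hδ0.le hδγ k x ?_⟩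
  rw [periodicIoo_eq_univ (by linarith)]
  trivial

end Psi

theorem statement13 (α : ℝ) (hα : 1 < α) (hirr : Irrational α)
    (κ : ℕ) (hκ : ⌈α⌉₊ ≤ κ) :
    ∃ c : ℝ, 0 < c ∧ ∀ x : ℝ, c ≤ psiConv α⁻¹ κ x := by
  have hακ : α < κ :=
    ((Nat.le_ceil α).lt_of_ne (hirr.ne_nat _)).trans_le (by exact_mod_cast hκ)
  refine exists_pos_le_psiConv (inv_le_one_of_one_le₀ hα.le) ?_
  rwa [← div_eq_mul_inv, one_lt_div (one_pos.trans hα)]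

end
end

section
/- Let α > 1 and γ = α^{-1} ∈ (0,1). If κ is an integer with 2 ≤ κ < ⌈α⌉ and x ∈ [0, γ], then ψ^{(κ)}(x) = ∫₀^x ψ^{(κ−1)}(y) dy. Moreover, the same identity holds for κ = ⌈α⌉ and x ∈ [κγ − 1, γ]. -/
open scoped BigOperators

noncomputable section

/-!
For `γ < 1`, multiplying by `ψ` on `[0, 1]` restricts to `(0, γ]`, so
`ψ^{(k+1)}(x) = ∫_{x-γ}^{x} ψ^{(k)}`. By induction `ψ^{(k)}` vanishes on `(kγ, 1]`, hence by
periodicity on `(kγ - 1, 0]`; when `(k+1)γ - 1 ≤ x ≤ γ` this kills the part `(x - γ, 0]` of the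
range of integration and leaves `∫_0^x ψ^{(k)}`.
-/

open MeasureTheory Set

namespace PsiConv

variable {γ : ℝ}

theorem psiConv_periodic (γ : ℝ) : ∀ κ, Function.Periodic (psiConv γ κ) 1
  | 0 => fun _ => rfl
  | 1 => fun x => by simp only [psiConv, psi, Int.fract_add_one]
  | k + 2 => fun x => by
    show (∫ y in (0:ℝ)..1, psiConv γ (k + 1) (x + 1 - y) * psi γ y) =
      ∫ y in (0:ℝ)..1, psiConv γ (k + 1) (x - y) * psi γ y
    refine intervalIntegral.integral_congr fun y _ => ?_
    simp only [add_sub_right_comm x 1 y, psiConv_periodic γ (k + 1) (x - y)]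

theorem psi_eq_indicator_of_mem_Icc (hγ : γ < 1) {y : ℝ} (hy : y ∈ Icc 0 1) :
    psi γ y = (Ioc 0 γ).indicator 1 y := by
  rcases hy.2.lt_or_eq with hy1 | rfl
  · simp [psi, indicator, Int.fract_eq_self.mpr ⟨hy.1, hy1⟩]
  · simp [psi, hγ.not_ge]

theorem integral_mul_psi (hγ : γ < 1) (f : ℝ → ℝ) :
    ∫ y in (0:ℝ)..1, f y * psi γ y = ∫ y in Ioc 0 γ, f y := by
  rw [intervalIntegral.integral_of_le zero_le_one,
    setIntegral_congr_fun measurableSet_Ioc (g := (Ioc 0 γ).indicator f) fun y hy => ?_,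
    setIntegral_indicator measurableSet_Ioc,
    inter_eq_right.mpr (Ioc_subset_Ioc_right hγ.le)]
  rw [psi_eq_indicator_of_mem_Icc hγ (Ioc_subset_Icc_self hy)]
  by_cases hyγ : y ∈ Ioc 0 γ <;> simp [hyγ]

theorem psiConv_add_two (hγ : γ < 1) (k : ℕ) (x : ℝ) :
    psiConv γ (k + 2) x = ∫ y in Ioc 0 γ, psiConv γ (k + 1) (x - y) :=
  integral_mul_psi hγ _

theorem psiConv_eq_zero_of_mem_Ioc (hγ0 : 0 ≤ γ) (hγ1 : γ < 1) (k : ℕ) {v : ℝ}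
    (hv : v ∈ Ioc ((k + 1) * γ) 1) : psiConv γ (k + 1) v = 0 := by
  induction k generalizing v with
  | zero =>
    rw [Nat.cast_zero, zero_add, one_mul] at hv
    have hv' : v ∈ Icc 0 1 := ⟨by linarith [hv.1], hv.2⟩
    show psi γ v = 0
    rw [psi_eq_indicator_of_mem_Icc hγ1 hv', indicator_of_notMem]
    exact fun h => by linarith [h.2, hv.1]
  | succ k ih =>
    rw [psiConv_add_two hγ1]
    refine setIntegral_eq_zero_of_forall_eq_zero fun y hy => ih ⟨?_, ?_⟩
    · push_cast at hv
      linarith [hv.1, hy.2]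
    · linarith [hv.2, hy.1]

theorem psiConv_eq_integral (hγ : γ < 1) {κ : ℕ} (hκ : 2 ≤ κ) {x : ℝ} (hx0 : 0 ≤ x)
    (hxκ : κ * γ - 1 ≤ x) (hxγ : x ≤ γ) :
    psiConv γ κ x = ∫ y in (0:ℝ)..x, psiConv γ (κ - 1) y := by
  obtain ⟨k, rfl⟩ := Nat.exists_eq_add_of_le' hκ
  have hvanish : ∀ u ∈ Ioc (x - γ) x \ Ioc 0 x, psiConv γ (k + 1) u = 0 := by
    rintro u ⟨⟨hu1, hu2⟩, hu⟩
    have hu0 : u ≤ 0 := by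
      by_contra! h
      exact hu ⟨h, hu2⟩
    rw [← psiConv_periodic γ (k + 1) u]
    refine psiConv_eq_zero_of_mem_Ioc (hx0.trans hxγ) hγ k ⟨?_, by linarith⟩
    push_cast at hxκ
    linarith
  calc psiConv γ (k + 2) x
      = ∫ y in (0:ℝ)..γ, psiConv γ (k + 1) (x - y) := by
        rw [psiConv_add_two hγ, intervalIntegral.integral_of_le (hx0.trans hxγ)]
    _ = ∫ u in Ioc (x - γ) x, psiConv γ (k + 1) u := by
        rw [intervalIntegral.integral_comp_sub_left, sub_zero,
          intervalIntegral.integral_of_le (by linarith)]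
    _ = ∫ u in Ioc 0 x, psiConv γ (k + 1) u :=
        setIntegral_eq_of_subset_of_forall_sdiff_eq_zero measurableSet_Ioc
          (Ioc_subset_Ioc_left (by linarith)) hvanish
    _ = ∫ y in (0:ℝ)..x, psiConv γ (k + 2 - 1) y :=
        (intervalIntegral.integral_of_le hx0).symm

end PsiConv

open PsiConv in
theorem statement16 (α : ℝ) (hα : 1 < α) (κ : ℕ) :
    (2 ≤ κ → κ < ⌈α⌉₊ → ∀ x ∈ Set.Icc (0 : ℝ) α⁻¹,
      psiConv α⁻¹ κ x = ∫ y in (0 : ℝ)..x, psiConv α⁻¹ (κ - 1) y) ∧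
    (κ = ⌈α⌉₊ → ∀ x ∈ Set.Icc ((κ : ℝ) * α⁻¹ - 1) α⁻¹,
      psiConv α⁻¹ κ x = ∫ y in (0 : ℝ)..x, psiConv α⁻¹ (κ - 1) y) := by
  have hα0 : 0 < α := one_pos.trans hα
  have hγ : α⁻¹ < 1 := inv_lt_one_of_one_lt₀ hα
  refine ⟨fun hκ hκα x hx => ?_, fun hκ x hx => ?_⟩
  · have hκγ : (κ : ℝ) * α⁻¹ < 1 := by
      rw [← div_eq_mul_inv, div_lt_one hα0]
      exact Nat.lt_ceil.mp hκα
    exact psiConv_eq_integral hγ hκ hx.1 (by linarith [hx.1]) hx.2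
  · have hκ2 : 2 ≤ κ := hκ ▸ Nat.lt_ceil.mpr (by exact_mod_cast hα)
    have hκγ : 1 ≤ (κ : ℝ) * α⁻¹ := by
      rw [← div_eq_mul_inv, one_le_div hα0, hκ]
      exact Nat.le_ceil α
    exact psiConv_eq_integral hγ hκ2 (by linarith [hx.1]) hx.1 hx.2

end
end

section
/- Let α > 1 and γ = α^{-1} ∈ (0,1). If κ is an integer with 1 ≤ κ < ⌈α⌉ and x ∈ (0, γ], then ψ^{(κ)}(x) = x^{κ−1}/(κ−1)!. -/
open scoped BigOperators

noncomputable section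

/-
Put `γ = α⁻¹ < 1`. On `(γ - 1, 1]` the function `ψ` is the indicator of `(0, γ]`,
so `ψ^{(k+2)}(x) = ∫₀^γ ψ^{(k+1)}(x - y) dy`. By induction on `k`, `ψ^{(k+1)}` agrees on the window
`((k + 1)γ - 1, γ]` with the truncated power `x₊^k / k!`: if `x` lies in the window for `k + 1` and
`0 ≤ y ≤ γ`, then `x - y` lies in the window for `k`, and integrating `t₊^k / k!`
over `[x - γ, x]` with `x - γ ≤ 0` gives `x₊^{k+1} / (k+1)!`. The hypothesis `κ < ⌈α⌉` says that
`(0, γ]` lies in the window for `κ`.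
-/

open Set MeasureTheory intervalIntegral

def truncPow (k : ℕ) : ℝ → ℝ := (Ioi 0).indicator fun t => t ^ k / k.factorial

lemma integral_truncPow {a b : ℝ} (ha : a ≤ 0) (hab : a ≤ b) (k : ℕ) :
    ∫ t in a..b, truncPow k t = truncPow (k + 1) b := by
  have hinter : Ioc a b ∩ Ioi 0 = Ioc 0 b := by
    ext t
    simp only [mem_inter_iff, mem_Ioc, mem_Ioi]
    constructor
    · rintro ⟨⟨-, htb⟩, ht⟩
      exact ⟨ht, htb⟩
    · rintro ⟨ht, htb⟩
      exact ⟨⟨ha.trans_lt ht, htb⟩, ht⟩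
  rw [integral_of_le hab, truncPow, setIntegral_indicator measurableSet_Ioi, hinter]
  rcases lt_or_ge 0 b with hb | hb
  · rw [← integral_of_le hb.le, intervalIntegral.integral_div, integral_pow, truncPow,
      indicator_of_mem (mem_Ioi.mpr hb), Nat.factorial_succ]
    push_cast
    field_simp
    ring
  · rw [Ioc_eq_empty hb.not_gt, Measure.restrict_empty, integral_zero_measure, truncPow,
      indicator_of_notMem (mt mem_Ioi.mp hb.not_gt)]

section

variable {γ : ℝ}

lemma psi_eq_indicator (hγ₀ : 0 ≤ γ) (hγ₁ : γ < 1) {y : ℝ} (hy : y ∈ Ioc (γ - 1) 1) :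
    psi γ y = (Ioc 0 γ).indicator 1 y := by
  obtain ⟨hy₀, hy₁⟩ := hy
  rcases lt_or_ge y 0 with hneg | hnonneg
  · have hfract : Int.fract y = y + 1 :=
      Int.fract_eq_iff.mpr ⟨by linarith, by linarith, -1, by push_cast; ring⟩
    rw [psi, hfract, if_neg (by intro h; linarith [h.2]),
      indicator_of_notMem (fun h => hneg.not_ge h.1.le)]
  rcases hy₁.lt_or_eq with hlt | rfl
  · simp [psi, indicator, Int.fract_eq_self.mpr ⟨hnonneg, hlt⟩]
  · simp [psi, hγ₁.not_ge]

lemma integral_comp_sub_mul_psi (hγ₀ : 0 ≤ γ) (hγ₁ : γ < 1) (f : ℝ → ℝ) (x : ℝ) :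
    ∫ y in (0 : ℝ)..1, f (x - y) * psi γ y = ∫ y in (0 : ℝ)..γ, f (x - y) := by
  calc ∫ y in (0 : ℝ)..1, f (x - y) * psi γ y
      = ∫ y in (0 : ℝ)..1, (Ioc 0 γ).indicator (fun y => f (x - y)) y := by
        refine integral_congr fun y hy => ?_
        rw [uIcc_of_le zero_le_one] at hy
        rw [psi_eq_indicator hγ₀ hγ₁ ⟨by linarith [hy.1], hy.2⟩]
        by_cases hyγ : y ∈ Ioc 0 γ <;> simp [hyγ]
    _ = ∫ y in (0 : ℝ)..γ, f (x - y) := by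
        rw [integral_of_le zero_le_one, setIntegral_indicator measurableSet_Ioc,
          inter_eq_self_of_subset_right (Ioc_subset_Ioc_right hγ₁.le), integral_of_le hγ₀]

lemma psiConv_succ_eq_truncPow (hγ₀ : 0 ≤ γ) (hγ₁ : γ < 1) (k : ℕ) {x : ℝ}
    (hx : x ∈ Ioc (((k : ℝ) + 1) * γ - 1) γ) : psiConv γ (k + 1) x = truncPow k x := by
  induction k generalizing x with
  | zero =>
    rw [Nat.cast_zero, zero_add, one_mul] at hx
    rw [psiConv, psi_eq_indicator hγ₀ hγ₁ ⟨hx.1, hx.2.trans hγ₁.le⟩, truncPow]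
    by_cases hpos : 0 < x
    · simp [hpos, hx.2]
    · simp [hpos]
  | succ k ih =>
    push_cast at hx
    have hwindow : ∀ y ∈ uIcc 0 γ, x - y ∈ Ioc (((k : ℝ) + 1) * γ - 1) γ := by
      intro y hy
      rw [uIcc_of_le hγ₀] at hy
      exact ⟨by linarith [hx.1, hy.2], by linarith [hx.2, hy.1]⟩
    calc psiConv γ (k + 1 + 1) x
        = ∫ y in (0 : ℝ)..1, psiConv γ (k + 1) (x - y) * psi γ y := rfl
      _ = ∫ y in (0 : ℝ)..γ, truncPow k (x - y) := by
          rw [integral_comp_sub_mul_psi hγ₀ hγ₁]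
          exact integral_congr fun y hy => ih (hwindow y hy)
      _ = truncPow (k + 1) x := by
          rw [integral_comp_sub_left (truncPow k), sub_zero]
          exact integral_truncPow (by linarith [hx.2]) (by linarith) k

end

theorem statement17 (α : ℝ) (hα : 1 < α) (κ : ℕ) (hκ₁ : 1 ≤ κ) (hκ₂ : κ < ⌈α⌉₊)
    (x : ℝ) (hx : x ∈ Set.Ioc (0 : ℝ) α⁻¹) :
    psiConv α⁻¹ κ x = x ^ (κ - 1) / (Nat.factorial (κ - 1) : ℝ) := by
  obtain ⟨k, rfl⟩ := Nat.exists_eq_add_of_le' hκ₁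
  have hα₀ : 0 < α := zero_lt_one.trans hα
  have hκα : ((k : ℝ) + 1) * α⁻¹ < 1 := by
    rw [← div_eq_mul_inv, div_lt_one hα₀]
    exact_mod_cast Nat.lt_ceil.mp hκ₂
  have hwindow : x ∈ Ioc (((k : ℝ) + 1) * α⁻¹ - 1) α⁻¹ := ⟨by linarith [hx.1], hx.2⟩
  rw [psiConv_succ_eq_truncPow (inv_nonneg.mpr hα₀.le) (inv_lt_one_of_one_lt₀ hα) k hwindow,
    truncPow, indicator_of_mem (mem_Ioi.mpr hx.1), Nat.add_sub_cancel]

end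
end
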